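/- arXiv:1905.03876 — 2 statements merged into one kernel-verified Lean document; each statement's English description precedes it below -/
import Mathlib

section
/- In the winner-bid auction with tie-breaker favoring the high-valuation agent, for any bid b_l > c_l = v_l/2, the pure strategy b_l of the low-valuation agent is weakly dominated by the bid c_l: against every pure strategy of the high-valuation agent, bidding c_l yields at least as high a payoff as bidding b_l, and strictly higher against some pure strategy. -/
open Finset Filter

/-- Payoff to the low-valuation agent in the winner-bid auction when she bids `b`
and the high-valuation agent bids `r` (ties won by the high-valuation agent). -/
noncomputable def UlWB (vl : ℕ) (b r : ℕ) : ℝ := if r < b then (vl : ℝ) - b else (r : ℝ)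

/-- Payoff to the high-valuation agent in the winner-bid auction when she bids `b`
and the low-valuation agent bids `r` (ties won by the high-valuation agent). -/
noncomputable def UhWB (vh : ℕ) (b r : ℕ) : ℝ := if r ≤ b then (vh : ℝ) - b else (r : ℝ)

/-- A mixed strategy on the bid set `{0, ..., pbar}`. -/
def IsMixed (pbar : ℕ) (σ : ℕ → ℝ) : Prop :=
  (∀ b, 0 ≤ σ b) ∧ (∀ b, pbar < b → σ b = 0) ∧ ∑ b ∈ Finset.range (pbar + 1), σ b = 1

/-- Expected payoff for the low-valuation agent of bidding `b` against `σh`. -/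
noncomputable def eUl (pbar vl : ℕ) (σh : ℕ → ℝ) (b : ℕ) : ℝ :=
  ∑ r ∈ Finset.range (pbar + 1), σh r * UlWB vl b r

/-- Expected payoff for the high-valuation agent of bidding `b` against `σl`. -/
noncomputable def eUh (pbar vh : ℕ) (σl : ℕ → ℝ) (b : ℕ) : ℝ :=
  ∑ r ∈ Finset.range (pbar + 1), σl r * UhWB vh b r

/-- Nash equilibrium of the winner-bid auction. -/
def IsNashWB (pbar vl vh : ℕ) (σl σh : ℕ → ℝ) : Prop :=
  IsMixed pbar σl ∧ IsMixed pbar σh ∧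
  (∀ b ≤ pbar, 0 < σl b → ∀ b' ≤ pbar, eUl pbar vl σh b' ≤ eUl pbar vl σh b) ∧
  (∀ b ≤ pbar, 0 < σh b → ∀ b' ≤ pbar, eUh pbar vh σl b' ≤ eUh pbar vh σl b)

/-- Expected payoff of the low-valuation agent at a mixed profile. -/
noncomputable def piL (pbar vl : ℕ) (σl σh : ℕ → ℝ) : ℝ :=
  ∑ b ∈ Finset.range (pbar + 1), σl b * eUl pbar vl σh b

/-- Expected payoff of the high-valuation agent at a mixed profile. -/
noncomputable def piH (pbar vh : ℕ) (σl σh : ℕ → ℝ) : ℝ :=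
  ∑ b ∈ Finset.range (pbar + 1), σh b * eUh pbar vh σl b

/-- Weak payoff monotonicity for the low-valuation agent. -/
def WPMl (pbar vl : ℕ) (σl σh : ℕ → ℝ) : Prop :=
  ∀ a ≤ pbar, ∀ b ≤ pbar, σl b < σl a → eUl pbar vl σh b < eUl pbar vl σh a

/-- Weak payoff monotonicity for the high-valuation agent. -/
def WPMh (pbar vh : ℕ) (σl σh : ℕ → ℝ) : Prop :=
  ∀ a ≤ pbar, ∀ b ≤ pbar, σh b < σh a → eUh pbar vh σl b < eUh pbar vh σl a

/-- Expected bid under a mixed strategy. -/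
noncomputable def Ebid (pbar : ℕ) (σ : ℕ → ℝ) : ℝ :=
  ∑ b ∈ Finset.range (pbar + 1), σ b * b

/-! Raising a bid from `c` to `b > c` changes the outcome only against bids `r` with
`c ≤ r < b`, where the agent now wins and gets `v - b` instead of the transfer `r`;
when `v ≤ 2c`, `v - b < c ≤ r`, so such a win is never worth its price. -/

section WinnerBid

variable {v b c r : ℕ}

theorem UlWB_of_lt (h : r < b) : UlWB v b r = v - b := if_pos h

theorem UlWB_of_le (h : b ≤ r) : UlWB v b r = r := if_neg h.not_gt

theorem UlWB_le_UlWB_of_le (hv : v ≤ 2 * c) (hcb : c ≤ b) (r : ℕ) :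
    UlWB v b r ≤ UlWB v c r := by
  have hv' : (v : ℝ) ≤ 2 * c := by exact_mod_cast hv
  have hcb' : (c : ℝ) ≤ b := by exact_mod_cast hcb
  rcases lt_or_ge r c with hrc | hcr
  · rw [UlWB_of_lt (hrc.trans_le hcb), UlWB_of_lt hrc]
    linarith
  rcases lt_or_ge r b with hrb | hbr
  · have hcr' : (c : ℝ) ≤ r := by exact_mod_cast hcr
    rw [UlWB_of_lt hrb, UlWB_of_le hcr]
    linarith
  · rw [UlWB_of_le hbr, UlWB_of_le hcr]

theorem UlWB_lt_UlWB_self (hv : v ≤ 2 * c) (hcb : c < b) : UlWB v b c < UlWB v c c := by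
  have hv' : (v : ℝ) ≤ 2 * c := by exact_mod_cast hv
  have hcb' : (c : ℝ) < b := by exact_mod_cast hcb
  rw [UlWB_of_lt hcb, UlWB_of_le le_rfl]
  linarith

end WinnerBid

theorem stmt6_general (pbar vl cl : ℕ) (hvl : vl = 2 * cl)
    (bl : ℕ) (hbl1 : cl < bl) (hbl2 : bl ≤ pbar) :
    (∀ r ≤ pbar, UlWB vl bl r ≤ UlWB vl cl r) ∧
    (∃ r ≤ pbar, UlWB vl bl r < UlWB vl cl r) :=
  ⟨fun r _ => UlWB_le_UlWB_of_le hvl.le hbl1.le r,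
    ⟨cl, hbl1.le.trans hbl2, UlWB_lt_UlWB_self hvl.le hbl1⟩⟩

/-- In the winner-bid auction, any bid `bl > cl` of the low-valuation agent is weakly
dominated by the bid `cl`: bidding `cl` does at least as well against every bid of the
high-valuation agent, and strictly better against some bid. -/
theorem stmt6 (pbar vl vh cl ch : ℕ) (hvl : vl = 2 * cl) (hvh : vh = 2 * ch)
    (hcl : 0 < cl) (hclch : cl < ch) (hpbar : ch ≤ pbar)
    (bl : ℕ) (hbl1 : cl < bl) (hbl2 : bl ≤ pbar) :
    (∀ r ≤ pbar, UlWB vl bl r ≤ UlWB vl cl r) ∧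
    (∃ r ≤ pbar, UlWB vl bl r < UlWB vl cl r) :=
  stmt6_general pbar vl cl hvl bl hbl1 hbl2
end

section
/- In the winner-bid auction with ties to h, if σ is a Nash equilibrium with payoff-determinant bid p > c_l (i.e., π_l(σ) > c_l), and {σ^λ} is a sequence of weakly payoff monotone profiles converging to σ, then for all sufficiently large λ the expected bid of the low-valuation agent is strictly less than the expected bid of the high-valuation agent: E_{σ_l^λ}(b) < E_{σ_h^λ}(b). -/
/-!
Since `v_l ≤ 2 (p - 1)`, bidding `p` is weakly dominated for the low agent by bidding `p - 1`:
against a lower bid it wins at a higher price, and at a tie with `p - 1` it would win and get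
`v_l - p ≤ p - 1`, whereas losing pays it `p - 1`. Weak payoff monotonicity therefore forces
`σ_l^λ(p) ≤ σ_l^λ(p - 1)`, and in the limit `σ_l(p - 1) ≥ σ_l(p) > 0`. So the equilibrium expected
bid of `l` is strictly below `p`, that of `h` is at least `p`, and expected bids are continuous in
the profile.
-/

open Finset Filter

open Topology

section WinnerBid

variable {pbar vl : ℕ}

theorem UlWB_succ_le {b : ℕ} (hvl : vl ≤ 2 * b) (r : ℕ) : UlWB vl (b + 1) r ≤ UlWB vl b r := by
  have hvl' : (vl : ℝ) ≤ 2 * b := by exact_mod_cast hvl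
  unfold UlWB
  split_ifs with h₁ h₂
  · push_cast; linarith
  · obtain rfl : r = b := by omega
    push_cast; linarith
  · omega
  · exact le_rfl

theorem eUl_succ_le {σh : ℕ → ℝ} (hσh : ∀ r, 0 ≤ σh r) {b : ℕ} (hvl : vl ≤ 2 * b) :
    eUl pbar vl σh (b + 1) ≤ eUl pbar vl σh b :=
  sum_le_sum fun r _ => mul_le_mul_of_nonneg_left (UlWB_succ_le hvl r) (hσh r)

theorem WPMl.le_of_eUl_le {σl σh : ℕ → ℝ} (h : WPMl pbar vl σl σh) {a b : ℕ}
    (ha : a ≤ pbar) (hb : b ≤ pbar) (hab : eUl pbar vl σh a ≤ eUl pbar vl σh b) :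
    σl a ≤ σl b :=
  not_lt.1 fun hlt => (h a ha b hb hlt).not_ge hab

theorem IsMixed.le_of_pos {σ : ℕ → ℝ} (hσ : IsMixed pbar σ) {b : ℕ} (hb : 0 < σ b) :
    b ≤ pbar :=
  not_lt.1 fun h => hb.ne' (hσ.2.1 b h)

theorem IsMixed.Ebid_add_mul_le {σ : ℕ → ℝ} (hσ : IsMixed pbar σ) {m : ℕ}
    (hsupp : ∀ b, 0 < σ b → b ≤ m) {k : ℕ} (hk : k ≤ pbar) :
    Ebid pbar σ + σ k * ((m : ℝ) - k) ≤ m := by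
  have hterm : ∀ b, 0 ≤ σ b * ((m : ℝ) - b) := fun b => by
    rcases (hσ.1 b).eq_or_lt with hb | hb
    · simp [← hb]
    · exact mul_nonneg hb.le (sub_nonneg.2 (by exact_mod_cast hsupp b hb))
  have hsum : ∑ b ∈ range (pbar + 1), σ b * ((m : ℝ) - b) = m - Ebid pbar σ := by
    simp only [Ebid, mul_sub, sum_sub_distrib, ← sum_mul, hσ.2.2, one_mul]
  have := single_le_sum (fun b _ => hterm b) (mem_range.2 (Nat.lt_succ_of_le hk))
  linarith

theorem IsMixed.le_Ebid {σ : ℕ → ℝ} (hσ : IsMixed pbar σ) {m : ℕ}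
    (hsupp : ∀ b, 0 < σ b → m ≤ b) : (m : ℝ) ≤ Ebid pbar σ :=
  calc (m : ℝ) = ∑ b ∈ range (pbar + 1), σ b * m := by rw [← sum_mul, hσ.2.2, one_mul]
    _ ≤ Ebid pbar σ := sum_le_sum fun b _ => by
      rcases (hσ.1 b).eq_or_lt with hb | hb
      · simp [← hb]
      · exact mul_le_mul_of_nonneg_left (by exact_mod_cast hsupp b hb) hb.le

theorem tendsto_Ebid {σs : ℕ → ℕ → ℝ} {σ : ℕ → ℝ}
    (h : ∀ b, Tendsto (fun n => σs n b) atTop (𝓝 (σ b))) :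
    Tendsto (fun n => Ebid pbar (σs n)) atTop (𝓝 (Ebid pbar σ)) :=
  tendsto_finsetSum _ fun b _ => (h b).mul_const _

end WinnerBid

theorem stmt18_general (pbar vl vh cl : ℕ) (hvl : vl = 2 * cl)
    (σl σh : ℕ → ℝ) (hNash : IsNashWB pbar vl vh σl σh)
    (p : ℕ) (hp1 : cl < p)
    (hsuppl : ∀ b, 0 < σl b → b ≤ p) (hsupph : ∀ b, 0 < σh b → p ≤ b)
    (hpl : 0 < σl p)
    (σsl σsh : ℕ → ℕ → ℝ)
    (hmix : ∀ n, IsMixed pbar (σsl n) ∧ IsMixed pbar (σsh n))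
    (hwpm : ∀ n, WPMl pbar vl (σsl n) (σsh n) ∧ WPMh pbar vh (σsl n) (σsh n))
    (hconvl : ∀ b, Tendsto (fun n => σsl n b) atTop (nhds (σl b)))
    (hconvh : ∀ b, Tendsto (fun n => σsh n b) atTop (nhds (σh b))) :
    ∃ N : ℕ, ∀ n ≥ N, Ebid pbar (σsl n) < Ebid pbar (σsh n) := by
  obtain ⟨q, rfl⟩ : ∃ q, p = q + 1 := ⟨p - 1, by omega⟩
  have hp : q + 1 ≤ pbar := hNash.1.le_of_pos hpl
  have hstep : ∀ n, σsl n (q + 1) ≤ σsl n q := fun n =>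
    (hwpm n).1.le_of_eUl_le hp (by omega) (eUl_succ_le (hmix n).2.1 (by omega))
  have hq : 0 < σl q :=
    hpl.trans_le (le_of_tendsto_of_tendsto' (hconvl _) (hconvl _) hstep)
  have hlt : Ebid pbar σl < Ebid pbar σh := by
    have hl := hNash.1.Ebid_add_mul_le hsuppl (k := q) (by omega)
    have hh := hNash.2.1.le_Ebid hsupph
    push_cast at hl hh
    linarith
  exact eventually_atTop.1 ((tendsto_Ebid hconvl).eventually_lt (tendsto_Ebid hconvh) hlt)

/-- If `σ` is a Nash equilibrium of the winner-bid auction with payoff-determinant bid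
`p > cl`, and `σ^λ` is a sequence of weakly payoff monotone profiles converging to `σ`, then
eventually the low-valuation agent's expected bid is strictly below the high-valuation
agent's expected bid. -/
theorem stmt18 (pbar vl vh cl ch : ℕ) (hvl : vl = 2 * cl) (hvh : vh = 2 * ch)
    (hcl : 0 < cl) (hclch : cl < ch) (hpbar : ch ≤ pbar)
    (σl σh : ℕ → ℝ) (hNash : IsNashWB pbar vl vh σl σh)
    (p : ℕ) (hp1 : cl < p) (hp2 : p ≤ ch)
    (hsuppl : ∀ b, 0 < σl b → b ≤ p) (hsupph : ∀ b, 0 < σh b → p ≤ b)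
    (hpl : 0 < σl p) (hph : 0 < σh p)
    (σsl σsh : ℕ → ℕ → ℝ)
    (hmix : ∀ n, IsMixed pbar (σsl n) ∧ IsMixed pbar (σsh n))
    (hwpm : ∀ n, WPMl pbar vl (σsl n) (σsh n) ∧ WPMh pbar vh (σsl n) (σsh n))
    (hconvl : ∀ b, Tendsto (fun n => σsl n b) atTop (nhds (σl b)))
    (hconvh : ∀ b, Tendsto (fun n => σsh n b) atTop (nhds (σh b))) :
    ∃ N : ℕ, ∀ n ≥ N, Ebid pbar (σsl n) < Ebid pbar (σsh n) :=
  stmt18_general pbar vl vh cl hvl σl σh hNash p hp1 hsuppl hsupph hpl σsl σsh hmix hwpm hconvl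
    hconvh
end
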